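/- arXiv:1305.7182 — 2 statements merged into one kernel-verified Lean document; each statement's English description precedes it below -/
import Mathlib

section
/- Under the surplus-based algorithm with parameters satisfying (P1)–(P4) and initial surpluses s_i(0) = 0, the surplus of every agent is nonnegative at every time: s_i(k) ≥ 0 for all i and all k. -/
/-!
The consensus term enters the state update only when it is nonpositive, so the state increment
of agent `i` is at most `ε_i s_i`. Hence the new surplus dominates
`(1 - ∑_h b_ih - ε_i) s_i + ∑_j b_ji s_j`, a nonnegative combination of the old surpluses,
and nonnegativity propagates by induction from `s(0) = 0`.
-/

open Finset

lemma ite_nonpos_mul_self_nonpos (A : ℝ) : (if A ≤ 0 then (1 : ℝ) else 0) * A ≤ 0 := by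
  split_ifs with hA <;> simp [hA]

lemma surplus_update_nonneg {ι : Type*} [Fintype ι] (b : ι → ι → ℝ) (s : ι → ℝ) (ε Δ : ℝ)
    (i : ι) (hb : ∀ j, 0 ≤ b j i) (hs : ∀ j, 0 ≤ s j) (hbsum : ∑ h, b i h < 1 - ε)
    (hΔ : Δ ≤ ε * s i) :
    0 ≤ (1 - ∑ h, b i h) * s i + ∑ j, b j i * s j - Δ := by
  have hown : 0 ≤ (1 - ∑ h, b i h - ε) * s i := mul_nonneg (by linarith) (hs i)
  have hin : 0 ≤ ∑ j, b j i * s j := sum_nonneg fun j _ => mul_nonneg (hb j) (hs j)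
  nlinarith

theorem stmt_1_general {n : ℕ} (E : ℕ → Fin n → Fin n → Prop)
    (x s : ℕ → Fin n → ℝ)
    (a b : ℕ → Fin n → Fin n → ℝ)  -- a k i j : updating weight; b k i h : sending weight
    (ε c : ℕ → Fin n → ℝ)
    (hb : ∀ k i h, (E k i h → 0 < b k i h ∧ b k i h < 1) ∧ (¬ E k i h → b k i h = 0))  -- (P3)
    (hbsum : ∀ k i, ∑ h, b k i h < 1 - ε k i)                           -- (P3)
    (hc : ∀ k i, c k i = if (∑ j, a k i j * (x k j - x k i)) ≤ 0 then 1 else 0) -- (P4)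
    (hs0 : ∀ i, s 0 i = 0)
    (hx : ∀ k i, x (k+1) i =
      x k i + c k i * (∑ j, a k i j * (x k j - x k i)) + ε k i * s k i)
    (hsupd : ∀ k i, s (k+1) i =
      (1 - ∑ h, b k i h) * s k i + (∑ j, b k j i * s k j) - (x (k+1) i - x k i)) :
    ∀ k i, 0 ≤ s k i := by
  have hb_nonneg : ∀ k i h, 0 ≤ b k i h := fun k i h => by
    by_cases he : E k i h
    · exact ((hb k i h).1 he).1.le
    · exact ((hb k i h).2 he).ge
  intro k
  induction k with
  | zero => exact fun i => (hs0 i).ge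
  | succ k ih =>
    intro i
    have hstep : x (k+1) i - x k i ≤ ε k i * s k i := by
      have hconsensus := ite_nonpos_mul_self_nonpos (∑ j, a k i j * (x k j - x k i))
      rw [← hc] at hconsensus
      rw [hx]
      linarith
    rw [hsupd]
    exact surplus_update_nonneg (b k) (s k) (ε k i) _ i (fun j => hb_nonneg k j i) ih
      (hbsum k i) hstep

/-- Under the surplus-based algorithm with (P1)-(P4) and zero initial surpluses,
every surplus is nonnegative at every time. `E k j i` means edge (j,i) at time `k`,
i.e. `j` is an in-neighbor of `i` (equivalently `i` is an out-neighbor of `j`). -/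
theorem stmt_1 {n : ℕ} (E : ℕ → Fin n → Fin n → Prop)
    (x s : ℕ → Fin n → ℝ)
    (a b : ℕ → Fin n → Fin n → ℝ)  -- a k i j : updating weight; b k i h : sending weight
    (ε c : ℕ → Fin n → ℝ)
    (hε : ∀ k i, 0 < ε k i ∧ ε k i < 1)                                 -- (P1)
    (ha : ∀ k i j, (E k j i → 0 < a k i j ∧ a k i j < 1) ∧ (¬ E k j i → a k i j = 0))  -- (P2)
    (hasum : ∀ k i, ∑ j, a k i j < 1)                                   -- (P2)
    (hb : ∀ k i h, (E k i h → 0 < b k i h ∧ b k i h < 1) ∧ (¬ E k i h → b k i h = 0))  -- (P3)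
    (hbsum : ∀ k i, ∑ h, b k i h < 1 - ε k i)                           -- (P3)
    (hc : ∀ k i, c k i = if (∑ j, a k i j * (x k j - x k i)) ≤ 0 then 1 else 0) -- (P4)
    (hs0 : ∀ i, s 0 i = 0)
    (hx : ∀ k i, x (k+1) i =
      x k i + c k i * (∑ j, a k i j * (x k j - x k i)) + ε k i * s k i)
    (hsupd : ∀ k i, s (k+1) i =
      (1 - ∑ h, b k i h) * s k i + (∑ j, b k j i * s k j) - (x (k+1) i - x k i)) :
    ∀ k i, 0 ≤ s k i :=
  stmt_1_general E x s a b ε c hb hbsum hc hs0 hx hsupd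
end

section
/- Under the surplus-based algorithm with parameters satisfying (P1)–(P4) and nonnegative surpluses, the minimum state m(x(k)) := min_i x_i(k) is non-decreasing in k: if k₁ ≤ k₂ then m(x(k₁)) ≤ m(x(k₂)). -/
/-!
An agent whose neighbour correction is nonpositive moves to
`(1 - ∑ⱼ aᵢⱼ) xᵢ + ∑ⱼ aᵢⱼ xⱼ`, a sub-convex combination of current states, which cannot fall
below the current minimum; an agent with positive correction ignores it. The surplus term
`εᵢ sᵢ` only pushes states up, so the minimum never decreases.
-/

open Finset

section SurplusUpdate

variable {ι R : Type*} [Fintype ι] [CommRing R] [LinearOrder R] [IsOrderedRing R]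
  {w y : ι → R} {m : R}

theorem le_add_sum_mul_sub (hw : ∀ j, 0 ≤ w j) (hw1 : ∑ j, w j ≤ 1) (hm : ∀ j, m ≤ y j)
    (i : ι) : m ≤ y i + ∑ j, w j * (y j - y i) := by
  have hsplit : y i + ∑ j, w j * (y j - y i) - m
      = (1 - ∑ j, w j) * (y i - m) + ∑ j, w j * (y j - m) := by
    simp only [mul_sub, sum_sub_distrib, ← sum_mul]
    ring
  have hnonneg : 0 ≤ (1 - ∑ j, w j) * (y i - m) + ∑ j, w j * (y j - m) :=
    add_nonneg (mul_nonneg (sub_nonneg.2 hw1) (sub_nonneg.2 (hm i)))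
      (sum_nonneg fun j _ => mul_nonneg (hw j) (sub_nonneg.2 (hm j)))
  exact sub_nonneg.1 (hsplit ▸ hnonneg)

theorem le_add_ite_mul_sum_add {t : R} (hw : ∀ j, 0 ≤ w j) (hw1 : ∑ j, w j ≤ 1)
    (hm : ∀ j, m ≤ y j) (ht : 0 ≤ t) (i : ι) :
    m ≤ y i + (if ∑ j, w j * (y j - y i) ≤ 0 then 1 else 0) * ∑ j, w j * (y j - y i) + t := by
  split_ifs
  · rw [one_mul]
    exact le_add_of_le_of_nonneg (le_add_sum_mul_sub hw hw1 hm i) ht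
  · rw [zero_mul, add_zero]
    exact le_add_of_le_of_nonneg (hm i) ht

end SurplusUpdate

/-- Under the surplus-based algorithm with (P1)-(P4) and nonnegative surpluses,
the minimum state is non-decreasing in time. -/
theorem stmt_2 {n : ℕ} (hn : 0 < n) (E : ℕ → Fin n → Fin n → Prop)
    (x s : ℕ → Fin n → ℝ)
    (a : ℕ → Fin n → Fin n → ℝ)
    (ε c : ℕ → Fin n → ℝ)
    (hε : ∀ k i, 0 < ε k i ∧ ε k i < 1)
    (ha : ∀ k i j, (E k j i → 0 < a k i j ∧ a k i j < 1) ∧ (¬ E k j i → a k i j = 0))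
    (hasum : ∀ k i, ∑ j, a k i j < 1)
    (hc : ∀ k i, c k i = if (∑ j, a k i j * (x k j - x k i)) ≤ 0 then 1 else 0)
    (hs : ∀ k i, 0 ≤ s k i)
    (hx : ∀ k i, x (k+1) i =
      x k i + c k i * (∑ j, a k i j * (x k j - x k i)) + ε k i * s k i) :
    ∀ k₁ k₂ : ℕ, k₁ ≤ k₂ →
      Finset.univ.inf' (Finset.univ_nonempty_iff.mpr ⟨⟨0, hn⟩⟩) (x k₁)
        ≤ Finset.univ.inf' (Finset.univ_nonempty_iff.mpr ⟨⟨0, hn⟩⟩) (x k₂) := by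
  have ha_nonneg : ∀ k i j, 0 ≤ a k i j := fun k i j => by
    by_cases h : E k j i
    exacts [((ha k i j).1 h).1.le, ((ha k i j).2 h).ge]
  have hstep : ∀ k, univ.inf' (univ_nonempty_iff.mpr ⟨⟨0, hn⟩⟩) (x k)
      ≤ univ.inf' (univ_nonempty_iff.mpr ⟨⟨0, hn⟩⟩) (x (k + 1)) := fun k =>
    le_inf' _ _ fun i _ => by
      rw [hx k i, hc k i]
      exact le_add_ite_mul_sum_add (ha_nonneg k i) (hasum k i).le
        (fun j => inf'_le (x k) (mem_univ j)) (mul_nonneg (hε k i).1.le (hs k i)) i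
  exact fun _ _ h => monotone_nat_of_le_succ hstep h
end
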